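/- Let S be a nonempty set of norms on E^n such that for every pair (x, y) of nonzero elements of E^n, either μ(x) ≥ μ(y) for all μ ∈ S, or μ(x) ≤ μ(y) for all μ ∈ S. Then there exist an integer r ≥ 0 and O_E-lattices L^0 ⊋ L^1 ⊋ … ⊋ L^r ⊋ m_E·L^0 in E^n such that every μ ∈ S can be written as μ = Σ_{i=0}^r a_i·μ_{L^i} for some real numbers a_0, …, a_r ≥ 0. -/

import Mathlib

noncomputable section

open scoped Pointwise

/-- The data of a complete discrete valuation field `E` with finite residue field of
cardinality `q`, packaged via its standard absolute value `v : E → ℝ` (so `v π = q⁻¹` for a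
uniformizer `π`, `v 0 = 0`). -/
structure NonarchCDVF (E : Type*) [Field E] (q : ℕ) : Type _ where
  /-- the standard absolute value -/
  v : E → ℝ
  v_zero : v 0 = 0
  v_pos : ∀ x : E, x ≠ 0 → 0 < v x
  v_mul : ∀ x y : E, v (x * y) = v x * v y
  v_add : ∀ x y : E, v (x + y) ≤ max (v x) (v y)
  one_lt_q : 1 < q
  /-- the valuation is discrete with value group `q^ℤ` -/
  discrete : ∀ x : E, x ≠ 0 → ∃ m : ℤ, v x = (q : ℝ) ^ m
  exists_uniformizer : ∃ π : E, v π = (q : ℝ) ^ (-1 : ℤ)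
  /-- the residue field `O_E/m_E` is finite of cardinality `q` -/
  residue_card : ∃ S : Finset E, S.card = q ∧
    ∀ x : E, v x ≤ 1 → ∃! s, s ∈ S ∧ v (x - s) < 1
  /-- `E` is complete: every Cauchy sequence converges -/
  complete : ∀ f : ℕ → E,
    (∀ ε : ℝ, 0 < ε → ∃ N : ℕ, ∀ m ≥ N, ∀ k ≥ N, v (f m - f k) < ε) →
    ∃ l : E, ∀ ε : ℝ, 0 < ε → ∃ N : ℕ, ∀ m ≥ N, v (f m - l) < ε

namespace NonarchCDVF

variable {E : Type*} [Field E] {q : ℕ}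

/-- The `O_E`-submodule of `E^n` generated by a finite set `B`
(`O_E = {a : E | v a ≤ 1}` is the valuation ring). -/
def latticeOf (D : NonarchCDVF E q) {n : ℕ} (B : Finset (Fin n → E)) :
    Set (Fin n → E) :=
  {x | ∃ c : (Fin n → E) → E, (∀ b, D.v (c b) ≤ 1) ∧ x = ∑ b ∈ B, c b • b}

/-- An `O_E`-lattice in `E^n`: a finitely generated `O_E`-submodule of `E^n`
which spans `E^n` over `E`. -/
def IsLattice (D : NonarchCDVF E q) {n : ℕ} (L : Set (Fin n → E)) : Prop :=
  ∃ B : Finset (Fin n → E),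
    L = D.latticeOf B ∧ Submodule.span E (B : Set (Fin n → E)) = ⊤

/-- The norm associated to a lattice `L`: `μ_L(x) = min {v a : a ∈ E, x ∈ a • L}`. -/
def latticeNorm (D : NonarchCDVF E q) {n : ℕ} (L : Set (Fin n → E))
    (x : Fin n → E) : ℝ :=
  sInf {r : ℝ | ∃ a : E, D.v a = r ∧ ∃ y ∈ L, x = a • y}

/-- A norm on `E^n`. -/
def IsNorm (D : NonarchCDVF E q) {n : ℕ} (μ : (Fin n → E) → ℝ) : Prop :=
  (∀ (a : E) (x : Fin n → E), μ (a • x) = D.v a * μ x) ∧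
  (∀ x y : Fin n → E, μ (x + y) ≤ max (μ x) (μ y)) ∧
  (∀ x : Fin n → E, x ≠ 0 → 0 < μ x)

/-- The image `m_E • L` of a set `L ⊆ E^n` under the maximal ideal
`m_E = {a : E | v a < 1}`. -/
def maxIdealSmul (D : NonarchCDVF E q) {n : ℕ} (L : Set (Fin n → E)) :
    Set (Fin n → E) :=
  {z | ∃ a : E, D.v a < 1 ∧ ∃ y ∈ L, z = a • y}

end NonarchCDVF

/-!
All norms in `S` induce one total preorder on `E^n`, so the balls
`B(y) = {x | μ x ≤ μ y for all μ ∈ S}` are common to all of them. Each ball is an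
`O_E`-lattice: it contains `π^M O_E^n` because `S` is comparable, and lies in `π^{-N} O_E^n`
because every norm on `E^n` dominates the sup norm, `E` being complete.
Fix `y₀ ≠ 0`. Every `x ≠ 0` has a rescaling `π^k x` in the annulus `B(y₀) \ B(π y₀)`, and the balls
of annulus elements are finitely many (all lie between two fixed lattices, and the residue field is
finite), so they form a chain `L⁰ = B(y₀) ⊋ … ⊋ Lʳ ⊋ π L⁰` with `Lⁱ = B(yᵢ)`.
If `B(π^k x) = Lⁱ`, then `μ x = q^k μ(yᵢ)` while `μ_{Lʲ}(x)` is `q^k` for `j ≤ i` and `q^{k+1}`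
for `j > i`, so the coefficients `aⱼ` solve a triangular system; they are nonnegative because
`μ(y₀) ≥ … ≥ μ(yᵣ) ≥ μ(y₀)/q`.
-/

theorem Set.Finite.exists_strictAnti_fin_of_isChain {α : Type*} [PartialOrder α] {s : Set α}
    (hs : s.Finite) (hne : s.Nonempty) (hc : IsChain (· ≤ ·) s) :
    ∃ (r : ℕ) (f : Fin (r + 1) → α), StrictAnti f ∧ Set.range f = s := by
  classical
  let : LinearOrder s :=
    { (inferInstance : PartialOrder s) with
      le_total := fun a b => hc.total a.2 b.2
      toDecidableLE := Classical.decRel _ }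
  have := hs.fintype
  have := hne.to_subtype
  obtain ⟨r, hr⟩ := Nat.exists_eq_succ_of_ne_zero (Fintype.card_ne_zero (α := sᵒᵈ))
  let e := monoEquivOfFin sᵒᵈ hr
  refine ⟨r, fun i => ((OrderDual.ofDual (e i) : s) : α), fun i j hij => e.strictMono hij, ?_⟩
  ext x
  refine ⟨?_, fun hx => ⟨e.symm (OrderDual.toDual ⟨x, hx⟩), by simp⟩⟩
  rintro ⟨i, rfl⟩
  exact (OrderDual.ofDual (e i)).2

theorem exists_nonneg_coeffs {q : ℝ} (hq : 1 < q) {r : ℕ} (c : Fin (r + 1) → ℝ)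
    (hc : Antitone c) (hcr : c 0 ≤ q * c (Fin.last r)) :
    ∃ a : Fin (r + 1) → ℝ, (∀ j, 0 ≤ a j) ∧ ∀ i, ∑ j, a j * (if j ≤ i then 1 else q) = c i := by
  have hq1 : 0 < q - 1 := by linarith
  -- `P t` is the prescribed partial sum `a 0 + ⋯ + a t`.
  let c' : ℕ → ℝ := fun t => c ⟨min t r, by omega⟩
  let P : ℕ → ℝ := fun t => (q * c (Fin.last r) - c' t) / (q - 1)
  let Q : ℕ → ℝ := fun t => if t = 0 then 0 else P (t - 1)
  have hP : Monotone P := fun s t hst => by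
    have : c' t ≤ c' s := hc (Fin.mk_le_mk.2 (by omega))
    simp only [P]; gcongr
  have hpartial : ∀ i, ∑ t ∈ Finset.range (i + 1), (P t - Q t) = P i := by
    intro i
    simpa [Q] using Finset.sum_range_sub Q (i + 1)
  refine ⟨fun j => P j - Q j, fun j => ?_, fun i => ?_⟩
  · rcases Nat.eq_zero_or_pos j with hj | hj
    · simp only [Q, hj, if_pos, sub_zero, P]
      exact div_nonneg (by simpa [c'] using hcr) hq1.le
    · simp only [Q, if_neg hj.ne', sub_nonneg]
      exact hP (Nat.sub_le _ _)
  have hfilter : (Finset.range (r + 1)).filter (· ≤ (i : ℕ)) = Finset.range (i + 1) := by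
    ext t; simp only [Finset.mem_filter, Finset.mem_range]; omega
  calc ∑ j : Fin (r + 1), (P j - Q j) * (if j ≤ i then 1 else q)
      = ∑ t ∈ Finset.range (r + 1),
          (q * (P t - Q t) - (q - 1) * if t ≤ (i : ℕ) then P t - Q t else 0) := by
        rw [← Fin.sum_univ_eq_sum_range
          (fun t => q * (P t - Q t) - (q - 1) * if t ≤ (i : ℕ) then P t - Q t else 0)]
        refine Finset.sum_congr rfl fun j _ => ?_
        simp only [Fin.le_iff_val_le_val]
        split_ifs <;> ring
    _ = q * P r - (q - 1) * P i := by
        rw [Finset.sum_sub_distrib, ← Finset.mul_sum, ← Finset.mul_sum, ← Finset.sum_filter,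
          hfilter, hpartial, hpartial]
    _ = c i := by
        simp only [P, c', min_self, min_eq_left i.is_le, Fin.eta]
        rw [show (⟨r, by omega⟩ : Fin (r + 1)) = Fin.last r from rfl]
        field_simp
        ring

theorem Submodule.le_of_finset_cover {R V : Type*} [Ring R] [AddCommGroup V] [Module R V]
    {K L L' : Submodule R V} {F : Finset V} (hKL : K ≤ L) (hKL' : K ≤ L')
    (hF : ∀ x ∈ L, ∃ f ∈ F, x - f ∈ K) (h : ∀ f ∈ F, f ∈ L → f ∈ L') : L ≤ L' := by
  intro x hx
  obtain ⟨f, hfF, hxf⟩ := hF x hx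
  have hfL : f ∈ L := by simpa using L.sub_mem hx (hKL hxf)
  simpa using L'.add_mem (h f hfF hfL) (hKL' hxf)

namespace NonarchCDVF

variable {E : Type*} [Field E] {q : ℕ} (D : NonarchCDVF E q)

lemma v_nonneg (x : E) : 0 ≤ D.v x := by
  rcases eq_or_ne x 0 with rfl | hx
  · exact D.v_zero.ge
  · exact (D.v_pos x hx).le

def absoluteValue : AbsoluteValue E ℝ where
  toFun := D.v
  map_mul' := D.v_mul
  nonneg' := D.v_nonneg
  eq_zero' x := ⟨fun h => by_contra fun hx => (D.v_pos x hx).ne' h, fun h => h ▸ D.v_zero⟩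
  add_le' x y := (D.v_add x y).trans (max_le_add_of_nonneg (D.v_nonneg x) (D.v_nonneg y))

lemma v_one : D.v 1 = 1 := D.absoluteValue.map_one

lemma v_neg (x : E) : D.v (-x) = D.v x := D.absoluteValue.map_neg x

lemma v_zpow (x : E) (k : ℤ) : D.v (x ^ k) = D.v x ^ k := map_zpow₀ D.absoluteValue x k

include D in
lemma one_lt_q_real : (1 : ℝ) < q := by exact_mod_cast D.one_lt_q

include D in
lemma q_pos : (0 : ℝ) < q := zero_lt_one.trans D.one_lt_q_real

lemma v_le_zpow_sub_one_of_lt {x : E} {k : ℤ} (h : D.v x < (q : ℝ) ^ k) :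
    D.v x ≤ (q : ℝ) ^ (k - 1) := by
  rcases eq_or_ne x 0 with rfl | hx
  · rw [D.v_zero]; exact (zpow_pos D.q_pos _).le
  obtain ⟨m, hm⟩ := D.discrete x hx
  rw [hm] at h ⊢
  have hmk : m < k := (zpow_lt_zpow_iff_right₀ D.one_lt_q_real).1 h
  exact zpow_le_zpow_right₀ D.one_lt_q_real.le (by omega)

def uniformizer : E := D.exists_uniformizer.choose

lemma v_uniformizer : D.v D.uniformizer = (q : ℝ)⁻¹ := by
  rw [← zpow_neg_one]; exact D.exists_uniformizer.choose_spec

lemma uniformizer_ne_zero : D.uniformizer ≠ 0 := fun h => by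
  have := D.v_uniformizer
  rw [h, D.v_zero] at this
  exact (inv_pos.2 D.q_pos).ne this

lemma v_uniformizer_zpow (k : ℤ) : D.v (D.uniformizer ^ k) = (q : ℝ) ^ (-k) := by
  rw [v_zpow, v_uniformizer, inv_zpow, zpow_neg]

lemma v_le_v_uniformizer_of_lt_one {a : E} (ha : D.v a < 1) : D.v a ≤ D.v D.uniformizer := by
  simpa [v_uniformizer] using D.v_le_zpow_sub_one_of_lt (k := 0) (by simpa using ha)

lemma v_uniformizer_zpow_mul_le_one {a : E} {k : ℤ} (ha : D.v a ≤ (q : ℝ) ^ k) :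
    D.v (D.uniformizer ^ k * a) ≤ 1 := by
  rw [D.v_mul, v_uniformizer_zpow]
  calc (q : ℝ) ^ (-k) * D.v a ≤ (q : ℝ) ^ (-k) * (q : ℝ) ^ k := by gcongr
    _ = 1 := by rw [← zpow_add₀ D.q_pos.ne', neg_add_cancel, zpow_zero]

lemma uniformizer_zpow_add_one_smul {V : Type*} [AddCommGroup V] [Module E V] (k : ℤ) (x : V) :
    D.uniformizer ^ (k + 1) • x = D.uniformizer • D.uniformizer ^ k • x := by
  rw [smul_smul, zpow_add_one₀ D.uniformizer_ne_zero, mul_comm]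

lemma exists_v_sub_le_zpow_sub_one (t : ℤ) :
    ∃ R : Finset E, ∀ a, D.v a ≤ (q : ℝ) ^ t → ∃ s ∈ R, D.v (a - s) ≤ (q : ℝ) ^ (t - 1) := by
  classical
  obtain ⟨S, -, hS⟩ := D.residue_card
  refine ⟨S.image (D.uniformizer ^ (-t) * ·), fun a ha => ?_⟩
  obtain ⟨s, ⟨hsS, hs⟩, -⟩ := hS _ (D.v_uniformizer_zpow_mul_le_one ha)
  refine ⟨_, Finset.mem_image_of_mem _ hsS, ?_⟩
  have hπ := zpow_ne_zero t D.uniformizer_ne_zero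
  have : a - D.uniformizer ^ (-t) * s = D.uniformizer ^ (-t) * (D.uniformizer ^ t * a - s) := by
    rw [zpow_neg]; field_simp
  rw [this, D.v_mul, v_uniformizer_zpow, neg_neg, zpow_sub_one₀ D.q_pos.ne', ← D.v_uniformizer]
  exact mul_le_mul_of_nonneg_left (D.v_le_v_uniformizer_of_lt_one hs) (zpow_pos D.q_pos _).le

lemma exists_finset_v_sub_le (N : ℤ) (d : ℕ) :
    ∃ F : Finset E, ∀ a, D.v a ≤ (q : ℝ) ^ N → ∃ f ∈ F, D.v (a - f) ≤ (q : ℝ) ^ (N - d) := by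
  classical
  induction d with
  | zero => exact ⟨{0}, fun a ha => ⟨0, Finset.mem_singleton_self 0, by simpa using ha⟩⟩
  | succ d ih =>
    obtain ⟨F, hF⟩ := ih
    obtain ⟨R, hR⟩ := D.exists_v_sub_le_zpow_sub_one (N - d)
    refine ⟨F + R, fun a ha => ?_⟩
    obtain ⟨f, hf, haf⟩ := hF a ha
    obtain ⟨s, hs, hafs⟩ := hR _ haf
    refine ⟨f + s, Finset.add_mem_add hf hs, ?_⟩
    rw [← sub_sub]
    convert hafs using 2
    push_cast
    ring

/-- The box `π^{-k} O_E^n`. -/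
def box (n : ℕ) (k : ℤ) : Set (Fin n → E) := {x | ∀ j, D.v (x j) ≤ (q : ℝ) ^ k}

lemma exists_finset_box_cover (n : ℕ) (N M : ℤ) :
    ∃ F : Finset (Fin n → E), ∀ z ∈ D.box n N, ∃ f ∈ F, z - f ∈ D.box n M := by
  classical
  obtain ⟨F, hF⟩ := D.exists_finset_v_sub_le N (N - M).toNat
  refine ⟨Fintype.piFinset fun _ => F, fun z hz => ?_⟩
  choose f hfF hf using fun j => hF (z j) (hz j)
  refine ⟨f, Fintype.mem_piFinset.2 hfF, fun j => (hf j).trans ?_⟩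
  exact zpow_le_zpow_right₀ D.one_lt_q_real.le (by omega)

namespace IsNorm

variable {D} {n : ℕ} {μ : (Fin n → E) → ℝ} (hμ : D.IsNorm μ)
include hμ

lemma map_zero : μ 0 = 0 := by
  simpa [D.v_zero] using hμ.1 0 0

lemma nonneg (x : Fin n → E) : 0 ≤ μ x := by
  rcases eq_or_ne x 0 with rfl | hx
  · exact hμ.map_zero.ge
  · exact (hμ.2.2 x hx).le

lemma map_neg (x : Fin n → E) : μ (-x) = μ x := by
  simpa [D.v_neg, D.v_one] using hμ.1 (-1) x

lemma map_uniformizer_zpow_smul (k : ℤ) (x : Fin n → E) :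
    μ (D.uniformizer ^ k • x) = (q : ℝ) ^ (-k) * μ x := by
  rw [hμ.1, D.v_uniformizer_zpow]

def toAddGroupNorm : AddGroupNorm (Fin n → E) where
  toFun := μ
  map_zero' := hμ.map_zero
  add_le' x y := (hμ.2.1 x y).trans (max_le_add_of_nonneg (hμ.nonneg x) (hμ.nonneg y))
  neg' := hμ.map_neg
  eq_zero_of_map_eq_zero' x h := by_contra fun hx => (hμ.2.2 x hx).ne' h

end IsNorm

/-- A type synonym for `E^n`, to carry the norm `μ` as its `NormedAddCommGroup` norm. -/
def NormedCopy {n : ℕ} (_μ : (Fin n → E) → ℝ) : Type _ := Fin n → E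

instance {n : ℕ} (μ : (Fin n → E) → ℝ) : AddCommGroup (NormedCopy μ) :=
  inferInstanceAs (AddCommGroup (Fin n → E))

instance {n : ℕ} (μ : (Fin n → E) → ℝ) : Module E (NormedCopy μ) :=
  inferInstanceAs (Module E (Fin n → E))

/-- Every norm on `E^n` dominates the sup norm: the identity from `(E^n, μ)` to `(E^n, sup)` is
a linear map out of a finite-dimensional space over the complete field `E`, hence continuous. -/
lemma exists_v_apply_le_mul {n : ℕ} {μ : (Fin n → E) → ℝ} (hμ : D.IsNorm μ) :
    ∃ C, 0 < C ∧ ∀ z j, D.v (z j) ≤ C * μ z := by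
  let : NormedField E := D.absoluteValue.toNormedField
  let : NontriviallyNormedField E := .ofNormNeOne ⟨D.uniformizer, D.uniformizer_ne_zero, by
    change D.v _ ≠ 1
    rw [D.v_uniformizer]
    exact (inv_lt_one_of_one_lt₀ D.one_lt_q_real).ne⟩
  have : CompleteSpace E := by
    have hdist : ∀ x y : E, dist x y = D.v (x - y) := dist_eq_norm
    refine Metric.complete_of_cauchySeq_tendsto fun u hu => ?_
    obtain ⟨l, hl⟩ := D.complete u (by simpa only [hdist] using Metric.cauchySeq_iff.1 hu)
    exact ⟨l, Metric.tendsto_atTop.2 (by simpa only [hdist] using hl)⟩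
  let : NormedAddCommGroup (NormedCopy μ) :=
    AddGroupNorm.toNormedAddCommGroup (E := NormedCopy μ) hμ.toAddGroupNorm
  let : NormedSpace E (NormedCopy μ) := ⟨fun a x => (hμ.1 a x).le⟩
  have : FiniteDimensional E (NormedCopy μ) := inferInstanceAs (FiniteDimensional E (Fin n → E))
  let f : NormedCopy μ →ₗ[E] (Fin n → E) := LinearMap.id
  obtain ⟨C, hC, hfC⟩ := ContinuousLinearMap.bound ⟨f, f.continuous_of_finiteDimensional⟩
  exact ⟨C, hC, fun z j => (norm_le_pi_norm (f z) j).trans (hfC z)⟩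

def integers : Subring E where
  carrier := {a | D.v a ≤ 1}
  mul_mem' {a b} ha hb := by
    simpa only [Set.mem_ofPred_eq, D.v_mul] using mul_le_one₀ ha (D.v_nonneg b) hb
  one_mem' := D.v_one.le
  add_mem' ha hb := (D.v_add _ _).trans (max_le ha hb)
  zero_mem' := by simp [D.v_zero]
  neg_mem' {a} ha := (D.v_neg a).le.trans ha

lemma latticeOf_eq_span {n : ℕ} (B : Finset (Fin n → E)) :
    D.latticeOf B = Submodule.span D.integers (B : Set (Fin n → E)) := by
  ext x
  constructor
  · rintro ⟨c, hc, rfl⟩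
    exact Submodule.sum_mem _ fun b hb =>
      Submodule.smul_mem _ (⟨c b, hc b⟩ : D.integers) (Submodule.subset_span hb)
  · intro hx
    obtain ⟨c, -, rfl⟩ := Submodule.mem_span_finset.1 hx
    exact ⟨fun b => c b, fun b => (c b).2, rfl⟩

lemma single_eq_smul_uniformizer_zpow_smul {n : ℕ} (k : ℤ) (j : Fin n) (a : E) :
    Pi.single j a =
      (D.uniformizer ^ (-k) * a) • D.uniformizer ^ k • (Pi.single j 1 : Fin n → E) := by
  rw [smul_smul, mul_right_comm, zpow_neg, inv_mul_cancel₀ (zpow_ne_zero k D.uniformizer_ne_zero),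
    one_mul, ← Pi.single_smul, smul_eq_mul, mul_one]

lemma box_subset_of_forall_mem {n : ℕ} (L : Submodule D.integers (Fin n → E)) (k : ℤ)
    (hL : ∀ j, D.uniformizer ^ k • (Pi.single j 1 : Fin n → E) ∈ L) :
    D.box n (-k) ⊆ L := by
  intro z hz
  rw [← Finset.univ_sum_single z]
  refine L.sum_mem fun j _ => ?_
  rw [D.single_eq_smul_uniformizer_zpow_smul k]
  exact L.smul_mem ⟨_, D.v_uniformizer_zpow_mul_le_one (hz j)⟩ (hL j)

lemma isLattice_of_subset_box {n : ℕ} (L : Submodule D.integers (Fin n → E)) {N k : ℤ}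
    (hub : (L : Set (Fin n → E)) ⊆ D.box n N)
    (hlb : ∀ j, D.uniformizer ^ k • (Pi.single j 1 : Fin n → E) ∈ L) :
    D.IsLattice (L : Set (Fin n → E)) := by
  classical
  obtain ⟨F, hF⟩ := D.exists_finset_box_cover n N (-k)
  set B : Finset (Fin n → E) := F.filter (· ∈ L) ∪
    Finset.univ.image fun j => D.uniformizer ^ k • (Pi.single j 1 : Fin n → E)
  have hbasis : ∀ j, D.uniformizer ^ k • (Pi.single j 1 : Fin n → E) ∈ B := fun j =>
    Finset.mem_union_right _ (Finset.mem_image_of_mem _ (Finset.mem_univ j))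
  refine ⟨B, ?_, ?_⟩
  · rw [latticeOf_eq_span]
    congr 1
    refine le_antisymm (fun z hz => ?_) (Submodule.span_le.2 fun b hb => ?_)
    · obtain ⟨f, hfF, hzf⟩ := hF z (hub hz)
      have hfB : f ∈ B := Finset.mem_union_left _ (Finset.mem_filter.2
        ⟨hfF, by simpa using L.sub_mem hz (D.box_subset_of_forall_mem L k hlb hzf)⟩)
      have := Submodule.add_mem _ (Submodule.subset_span hfB) (D.box_subset_of_forall_mem _ k
        (fun j => Submodule.subset_span (hbasis j)) hzf)
      rwa [add_sub_cancel] at this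
    · rcases Finset.mem_union.1 hb with hb | hb
      · exact (Finset.mem_filter.1 hb).2
      · obtain ⟨j, -, rfl⟩ := Finset.mem_image.1 hb
        exact hlb j
  · refine Submodule.eq_top_iff'.2 fun z => ?_
    rw [← Finset.univ_sum_single z]
    refine Submodule.sum_mem _ fun j _ => ?_
    rw [D.single_eq_smul_uniformizer_zpow_smul k]
    exact Submodule.smul_mem _ _ (Submodule.subset_span (hbasis j))

lemma uniformizer_zpow_mem_integers {k : ℤ} (hk : 0 ≤ k) : D.uniformizer ^ k ∈ D.integers := by
  change D.v _ ≤ 1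
  rw [D.v_uniformizer_zpow]
  exact zpow_le_one_of_nonpos₀ D.one_lt_q_real.le (by omega)

lemma zpow_smul_mem_of_le {V : Type*} [AddCommGroup V] [Module E V] (L : Submodule D.integers V)
    {k l : ℤ} (hkl : k ≤ l) {x : V} (hx : D.uniformizer ^ k • x ∈ L) :
    D.uniformizer ^ l • x ∈ L := by
  have := L.smul_mem ⟨_, D.uniformizer_zpow_mem_integers (sub_nonneg.2 hkl)⟩ hx
  rwa [Submonoid.mk_smul, smul_smul, ← zpow_add₀ D.uniformizer_ne_zero, sub_add_cancel] at this

lemma latticeNorm_zero {n : ℕ} (L : Submodule D.integers (Fin n → E)) :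
    D.latticeNorm (L : Set (Fin n → E)) 0 = 0 :=
  IsLeast.csInf_eq ⟨⟨0, D.v_zero, 0, L.zero_mem, (smul_zero _).symm⟩,
    by rintro _ ⟨a, rfl, -⟩; exact D.v_nonneg a⟩

lemma latticeNorm_eq_zpow {n : ℕ} (L : Submodule D.integers (Fin n → E)) {x : Fin n → E} {k : ℤ}
    (h : D.uniformizer ^ k • x ∈ L) (h' : D.uniformizer ^ (k - 1) • x ∉ L) :
    D.latticeNorm (L : Set (Fin n → E)) x = (q : ℝ) ^ k := by
  refine IsLeast.csInf_eq ⟨⟨(D.uniformizer ^ k)⁻¹, ?_, _, h, ?_⟩, ?_⟩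
  · rw [← zpow_neg, v_uniformizer_zpow, neg_neg]
  · exact (inv_smul_smul₀ (zpow_ne_zero k D.uniformizer_ne_zero) x).symm
  · rintro _ ⟨a, rfl, y, hy, rfl⟩
    by_contra hlt
    refine h' ?_
    rw [smul_smul]
    exact L.smul_mem ⟨_, D.v_uniformizer_zpow_mul_le_one
      (D.v_le_zpow_sub_one_of_lt (not_le.1 hlt))⟩ hy

section Ball

variable {n : ℕ} {S : Set ((Fin n → E) → ℝ)} (hS : ∀ μ ∈ S, D.IsNorm μ)

def ball (y : Fin n → E) : Submodule D.integers (Fin n → E) where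
  carrier := {x | ∀ μ ∈ S, μ x ≤ μ y}
  add_mem' hx hx' μ hμ := ((hS μ hμ).2.1 _ _).trans (max_le (hx μ hμ) (hx' μ hμ))
  zero_mem' μ hμ := (hS μ hμ).map_zero ▸ (hS μ hμ).nonneg y
  smul_mem' a x hx μ hμ := by
    change μ ((a : E) • x) ≤ μ y
    rw [(hS μ hμ).1]
    exact (mul_le_of_le_one_left ((hS μ hμ).nonneg x) a.2).trans (hx μ hμ)

variable {D hS}

lemma mem_ball_self (y : Fin n → E) : y ∈ D.ball hS y := fun _ _ => le_rfl

lemma mem_ball_trans {x y z : Fin n → E} (hxy : x ∈ D.ball hS y) (hyz : y ∈ D.ball hS z) :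
    x ∈ D.ball hS z :=
  fun μ hμ => (hxy μ hμ).trans (hyz μ hμ)

lemma ball_le_ball_iff {x y : Fin n → E} : D.ball hS x ≤ D.ball hS y ↔ x ∈ D.ball hS y :=
  ⟨fun h => h (mem_ball_self x), fun h _ hz => mem_ball_trans hz h⟩

lemma smul_mem_ball_smul {a b : E} (hab : D.v a ≤ D.v b) {x y : Fin n → E}
    (hx : x ∈ D.ball hS y) : a • x ∈ D.ball hS (b • y) := fun μ hμ => by
  rw [(hS μ hμ).1, (hS μ hμ).1]
  exact mul_le_mul hab (hx μ hμ) ((hS μ hμ).nonneg x) (D.v_nonneg b)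

lemma mem_ball_of_smul_mem_ball_smul {a : E} (ha : a ≠ 0) {x y : Fin n → E}
    (h : a • x ∈ D.ball hS (a • y)) : x ∈ D.ball hS y := fun μ hμ => by
  have := h μ hμ
  rw [(hS μ hμ).1, (hS μ hμ).1] at this
  exact le_of_mul_le_mul_left this (D.v_pos a ha)

variable (D hS)

def annulus (y0 : Fin n → E) : Set (Fin n → E) :=
  {x | x ∈ D.ball hS y0 ∧ x ∉ D.ball hS (D.uniformizer • y0)}

variable {D hS}

lemma ne_zero_of_mem_annulus {x y0 : Fin n → E} (hx : x ∈ D.annulus hS y0) : x ≠ 0 := by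
  rintro rfl
  exact hx.2 (zero_mem _)

lemma mem_annulus_self {μ0 : (Fin n → E) → ℝ} (hμ0 : μ0 ∈ S) {y0 : Fin n → E} (hy0 : y0 ≠ 0) :
    y0 ∈ D.annulus hS y0 := by
  refine ⟨mem_ball_self y0, fun h => ?_⟩
  have := h μ0 hμ0
  rw [(hS μ0 hμ0).1, D.v_uniformizer] at this
  exact this.not_gt (mul_lt_of_lt_one_left ((hS μ0 hμ0).2.2 y0 hy0)
    (inv_lt_one_of_one_lt₀ D.one_lt_q_real))

lemma exists_ball_subset_box {μ0 : (Fin n → E) → ℝ} (hμ0 : μ0 ∈ S) (y : Fin n → E) :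
    ∃ N : ℤ, (D.ball hS y : Set (Fin n → E)) ⊆ D.box n N := by
  obtain ⟨C, hC, hCμ⟩ := D.exists_v_apply_le_mul (hS μ0 hμ0)
  obtain ⟨N, hN⟩ := pow_unbounded_of_one_lt (C * μ0 y) D.one_lt_q_real
  refine ⟨N, fun x hx j => ?_⟩
  calc D.v (x j) ≤ C * μ0 x := hCμ x j
    _ ≤ C * μ0 y := by gcongr; exact hx μ0 hμ0
    _ ≤ (q : ℝ) ^ (N : ℤ) := by rw [zpow_natCast]; exact hN.le

lemma maxIdealSmul_ball_subset {y y0 : Fin n → E} (hy : y ∈ D.ball hS y0) :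
    D.maxIdealSmul (D.ball hS y) ⊆ (D.ball hS (D.uniformizer • y0) : Set (Fin n → E)) := by
  rintro _ ⟨a, ha, u, hu, rfl⟩
  exact smul_mem_ball_smul (D.v_le_v_uniformizer_of_lt_one ha) (mem_ball_trans hu hy)

section Comparable

variable (hcomp : ∀ x y : Fin n → E, x ∈ D.ball hS y ∨ y ∈ D.ball hS x)
include hcomp

lemma uniformizer_smul_mem_ball_of_mem_annulus {x y0 : Fin n → E} (hx : x ∈ D.annulus hS y0) :
    D.uniformizer • y0 ∈ D.ball hS x :=
  (hcomp _ _).resolve_right hx.2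

lemma exists_zpow_smul_mem_ball {μ0 : (Fin n → E) → ℝ} (hμ0 : μ0 ∈ S) (x : Fin n → E)
    {y : Fin n → E} (hy : y ≠ 0) : ∃ k : ℤ, D.uniformizer ^ k • x ∈ D.ball hS y := by
  obtain ⟨k, hk⟩ := pow_unbounded_of_one_lt (μ0 x / μ0 y) D.one_lt_q_real
  refine ⟨k, (hcomp _ _).resolve_right fun h => ?_⟩
  have := h μ0 hμ0
  rw [(hS μ0 hμ0).map_uniformizer_zpow_smul, zpow_neg, zpow_natCast,
    le_inv_mul_iff₀ (pow_pos D.q_pos k)] at this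
  rw [div_lt_iff₀ ((hS μ0 hμ0).2.2 y hy)] at hk
  linarith

lemma exists_zpow_smul_mem_annulus {μ0 : (Fin n → E) → ℝ} (hμ0 : μ0 ∈ S) {y0 : Fin n → E}
    (hy0 : y0 ≠ 0) {x : Fin n → E} (hx : x ≠ 0) :
    ∃ k : ℤ, D.uniformizer ^ k • x ∈ D.annulus hS y0 := by
  have hx0 := (hS μ0 hμ0).2.2 x hx
  obtain ⟨K, hK⟩ := pow_unbounded_of_one_lt (μ0 y0 / μ0 x) D.one_lt_q_real
  have hbdd : ∀ k : ℤ, D.uniformizer ^ k • x ∈ D.ball hS y0 → -(K : ℤ) ≤ k := by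
    intro k hk
    by_contra hlt
    have hle := hk μ0 hμ0
    rw [(hS μ0 hμ0).map_uniformizer_zpow_smul] at hle
    have hqK : (q : ℝ) ^ K ≤ (q : ℝ) ^ (-k) := by
      rw [← zpow_natCast]; exact zpow_le_zpow_right₀ D.one_lt_q_real.le (by omega)
    rw [div_lt_iff₀ hx0] at hK
    nlinarith
  obtain ⟨k, hk, hmin⟩ := Int.exists_least_of_bdd ⟨_, hbdd⟩
    (exists_zpow_smul_mem_ball hcomp hμ0 x hy0)
  refine ⟨k, hk, fun h => ?_⟩
  rw [← sub_add_cancel k 1, D.uniformizer_zpow_add_one_smul] at h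
  have := hmin _ (mem_ball_of_smul_mem_ball_smul D.uniformizer_ne_zero h)
  omega

lemma exists_forall_zpow_smul_single_mem_ball {μ0 : (Fin n → E) → ℝ} (hμ0 : μ0 ∈ S)
    {y : Fin n → E} (hy : y ≠ 0) :
    ∃ k : ℤ, ∀ j, D.uniformizer ^ k • (Pi.single j 1 : Fin n → E) ∈ D.ball hS y := by
  choose k hk using fun j : Fin n => exists_zpow_smul_mem_ball hcomp hμ0 (Pi.single j 1) hy
  obtain ⟨K, hK⟩ := Finite.exists_le k
  exact ⟨K, fun j => D.zpow_smul_mem_of_le _ (hK j) (hk j)⟩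

lemma isLattice_ball {μ0 : (Fin n → E) → ℝ} (hμ0 : μ0 ∈ S) {y : Fin n → E} (hy : y ≠ 0) :
    D.IsLattice (D.ball hS y : Set (Fin n → E)) := by
  obtain ⟨N, hN⟩ := exists_ball_subset_box hμ0 y
  obtain ⟨k, hk⟩ := exists_forall_zpow_smul_single_mem_ball hcomp hμ0 hy
  exact D.isLattice_of_subset_box _ hN hk

lemma isChain_image_ball (s : Set (Fin n → E)) : IsChain (· ≤ ·) (D.ball hS '' s) := by
  rintro _ ⟨x, -, rfl⟩ _ ⟨y, -, rfl⟩ -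
  exact (hcomp x y).imp ball_le_ball_iff.2 ball_le_ball_iff.2

/-- These balls contain `B(π y₀)` and lie in `B(y₀)`, which is covered by finitely many translates
`f + B(π y₀)`; so each of them is determined by which of the finitely many `f` it contains. -/
lemma finite_image_ball_annulus {μ0 : (Fin n → E) → ℝ} (hμ0 : μ0 ∈ S) {y0 : Fin n → E}
    (hy0 : y0 ≠ 0) : (D.ball hS '' D.annulus hS y0).Finite := by
  classical
  obtain ⟨N, hN⟩ := exists_ball_subset_box hμ0 y0
  obtain ⟨k, hk⟩ := exists_forall_zpow_smul_single_mem_ball hcomp hμ0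
    (smul_ne_zero D.uniformizer_ne_zero hy0)
  obtain ⟨F, hF⟩ := D.exists_finset_box_cover n N (-k)
  have hK : ∀ L ∈ D.ball hS '' D.annulus hS y0, D.ball hS (D.uniformizer • y0) ≤ L := by
    rintro _ ⟨x, hx, rfl⟩
    exact ball_le_ball_iff.2 (uniformizer_smul_mem_ball_of_mem_annulus hcomp hx)
  have hcover : ∀ L ∈ D.ball hS '' D.annulus hS y0, ∀ x ∈ L,
      ∃ f ∈ F, x - f ∈ D.ball hS (D.uniformizer • y0) := by
    rintro _ ⟨y, hy, rfl⟩ x hx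
    obtain ⟨f, hfF, hxf⟩ := hF x (hN (mem_ball_trans hx hy.1))
    exact ⟨f, hfF, D.box_subset_of_forall_mem _ k hk hxf⟩
  refine Set.Finite.of_finite_image (f := fun L => F.filter (· ∈ L))
    (F.powerset.finite_toSet.subset ?_) fun L hL L' hL' h => ?_
  · rintro _ ⟨L, -, rfl⟩
    exact Finset.mem_powerset.2 (Finset.filter_subset _ _)
  · have h' : ∀ f ∈ F, f ∈ L ↔ f ∈ L' := fun f hf => by
      simpa [hf] using Finset.ext_iff.1 h f
    exact le_antisymm
      (Submodule.le_of_finset_cover (hK L hL) (hK L' hL') (hcover L hL) fun f hf => (h' f hf).1)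
      (Submodule.le_of_finset_cover (hK L' hL') (hK L hL) (hcover L' hL') fun f hf => (h' f hf).2)

lemma exists_ball_enumeration {μ0 : (Fin n → E) → ℝ} (hμ0 : μ0 ∈ S) {y0 : Fin n → E}
    (hy0 : y0 ≠ 0) :
    ∃ (r : ℕ) (y : Fin (r + 1) → Fin n → E), (∀ i, y i ∈ D.annulus hS y0) ∧
      StrictAnti (fun i => D.ball hS (y i)) ∧
      ∀ x ∈ D.annulus hS y0, ∃ i, D.ball hS x = D.ball hS (y i) := by
  obtain ⟨r, L, hL, hrange⟩ :=
    (finite_image_ball_annulus hcomp hμ0 hy0).exists_strictAnti_fin_of_isChain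
      ⟨_, y0, mem_annulus_self hμ0 hy0, rfl⟩ (isChain_image_ball hcomp _)
  choose y hy hyL using fun i => hrange.subset (Set.mem_range_self i)
  refine ⟨r, y, hy, by simpa only [hyL] using hL, fun x hx => ?_⟩
  obtain ⟨i, hi⟩ := hrange.symm.subset (Set.mem_image_of_mem _ hx)
  exact ⟨i, by rw [hyL, hi]⟩

lemma maxIdealSmul_ball_ssubset {y y' y0 : Fin n → E} (hy : y ∈ D.annulus hS y0)
    (hy' : y' ∈ D.annulus hS y0) :
    D.maxIdealSmul (D.ball hS y) ⊂ (D.ball hS y' : Set (Fin n → E)) :=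
  ssubset_of_subset_not_superset
    (fun _ hz => mem_ball_trans (maxIdealSmul_ball_subset hy.1 hz)
      (uniformizer_smul_mem_ball_of_mem_annulus hcomp hy'))
    fun h => hy'.2 (maxIdealSmul_ball_subset hy.1 (h (mem_ball_self y')))

open Classical in
lemma latticeNorm_ball {y y0 x : Fin n → E} {k : ℤ} (hy : y ∈ D.annulus hS y0)
    (hx : D.uniformizer ^ k • x ∈ D.annulus hS y0) :
    D.latticeNorm (D.ball hS y) x =
      if D.uniformizer ^ k • x ∈ D.ball hS y then (q : ℝ) ^ k else (q : ℝ) ^ (k + 1) := by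
  split_ifs with h
  · refine D.latticeNorm_eq_zpow _ h fun h' => hx.2 ?_
    rw [← sub_add_cancel k 1, D.uniformizer_zpow_add_one_smul]
    exact mem_ball_trans (smul_mem_ball_smul le_rfl h') (smul_mem_ball_smul le_rfl hy.1)
  · refine D.latticeNorm_eq_zpow _ ?_ (by rwa [add_sub_cancel_right])
    rw [D.uniformizer_zpow_add_one_smul]
    exact mem_ball_trans (smul_mem_ball_smul le_rfl hx.1)
      (uniformizer_smul_mem_ball_of_mem_annulus hcomp hy)

lemma exists_nonneg_coeffs_latticeNorm_ball {μ0 : (Fin n → E) → ℝ} (hμ0 : μ0 ∈ S)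
    {y0 : Fin n → E} (hy0 : y0 ≠ 0) {r : ℕ} {y : Fin (r + 1) → Fin n → E}
    (hy : ∀ i, y i ∈ D.annulus hS y0) (hanti : StrictAnti fun i => D.ball hS (y i))
    (hcover : ∀ x ∈ D.annulus hS y0, ∃ i, D.ball hS x = D.ball hS (y i))
    {μ : (Fin n → E) → ℝ} (hμ : μ ∈ S) :
    ∃ a : Fin (r + 1) → ℝ, (∀ i, 0 ≤ a i) ∧
      ∀ x, μ x = ∑ i, a i * D.latticeNorm (D.ball hS (y i)) x := by
  have hc0 : μ (y 0) ≤ q * μ (y (Fin.last r)) := by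
    have h := uniformizer_smul_mem_ball_of_mem_annulus hcomp (hy (Fin.last r)) μ hμ
    rw [(hS μ hμ).1, D.v_uniformizer] at h
    calc μ (y 0) ≤ μ y0 := (hy 0).1 μ hμ
      _ = q * ((q : ℝ)⁻¹ * μ y0) := by rw [mul_inv_cancel_left₀ D.q_pos.ne']
      _ ≤ q * μ (y (Fin.last r)) := by gcongr
  obtain ⟨a, ha, hsum⟩ := exists_nonneg_coeffs D.one_lt_q_real (fun i => μ (y i))
    (fun i j hij => ball_le_ball_iff.1 (hanti.antitone hij) μ hμ) hc0
  refine ⟨a, ha, fun x => ?_⟩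
  rcases eq_or_ne x 0 with rfl | hx
  · simp [(hS μ hμ).map_zero, latticeNorm_zero]
  obtain ⟨k, hk⟩ := exists_zpow_smul_mem_annulus hcomp hμ0 hy0 hx
  obtain ⟨i, hi⟩ := hcover _ hk
  have hmem : ∀ j, D.uniformizer ^ k • x ∈ D.ball hS (y j) ↔ j ≤ i := fun j => by
    rw [← ball_le_ball_iff, hi]
    exact hanti.le_iff_ge
  have hμx : μ x = (q : ℝ) ^ k * μ (y i) := by
    have h1 : μ (D.uniformizer ^ k • x) = μ (y i) :=
      le_antisymm (ball_le_ball_iff.1 hi.le μ hμ) (ball_le_ball_iff.1 hi.ge μ hμ)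
    rw [(hS μ hμ).map_uniformizer_zpow_smul, zpow_neg] at h1
    rw [← h1, mul_inv_cancel_left₀ (zpow_ne_zero k D.q_pos.ne')]
  rw [hμx, ← hsum i, Finset.mul_sum]
  refine Finset.sum_congr rfl fun j _ => ?_
  rw [latticeNorm_ball hcomp (hy j) hk, zpow_add_one₀ D.q_pos.ne']
  by_cases hj : j ≤ i
  · rw [if_pos hj, if_pos ((hmem j).2 hj)]; ring
  · rw [if_neg hj, if_neg (mt (hmem j).1 hj)]; ring

end Comparable

end Ball

end NonarchCDVF

open NonarchCDVF

/-- Let `S` be a nonempty set of norms on `E^n` such that for every pair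
`(x, y)` of nonzero elements of `E^n`, either `μ(x) ≥ μ(y)` for all `μ ∈ S`, or
`μ(x) ≤ μ(y)` for all `μ ∈ S`.  Then there is a chain of lattices
`L^0 ⊋ … ⊋ L^r ⊋ m_E·L^0` such that every `μ ∈ S` is a nonnegative linear combination of the
lattice norms `μ_{L^i}`. -/
theorem statement4 {E : Type*} [Field E] {q : ℕ} (D : NonarchCDVF E q) (n : ℕ) (hn : 1 ≤ n)
    (S : Set ((Fin n → E) → ℝ)) (hSne : S.Nonempty) (hSnorm : ∀ μ ∈ S, D.IsNorm μ)
    (hcomp : ∀ x y : Fin n → E, x ≠ 0 → y ≠ 0 →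
      (∀ μ ∈ S, μ y ≤ μ x) ∨ (∀ μ ∈ S, μ x ≤ μ y)) :
    ∃ (r : ℕ) (L : Fin (r + 1) → Set (Fin n → E)),
      (∀ i, D.IsLattice (L i)) ∧
      (∀ i : Fin r, L i.succ ⊂ L i.castSucc) ∧
      D.maxIdealSmul (L 0) ⊂ L (Fin.last r) ∧
      ∀ μ ∈ S, ∃ a : Fin (r + 1) → ℝ, (∀ i, 0 ≤ a i) ∧
        ∀ x : Fin n → E, μ x = ∑ i, a i * D.latticeNorm (L i) x := by
  obtain ⟨μ0, hμ0⟩ := hSne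
  have htotal : ∀ x y : Fin n → E, x ∈ D.ball hSnorm y ∨ y ∈ D.ball hSnorm x := by
    intro x y
    rcases eq_or_ne x 0 with rfl | hx
    · exact .inl (zero_mem _)
    rcases eq_or_ne y 0 with rfl | hy
    · exact .inr (zero_mem _)
    exact (hcomp x y hx hy).symm
  have hy0 : (Pi.single ⟨0, hn⟩ 1 : Fin n → E) ≠ 0 := by simp
  obtain ⟨r, y, hy, hanti, hcover⟩ := exists_ball_enumeration htotal hμ0 hy0
  exact ⟨r, fun i => D.ball hSnorm (y i),
    fun i => isLattice_ball htotal hμ0 (ne_zero_of_mem_annulus (hy i)),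
    fun i => SetLike.coe_ssubset_coe.2 (hanti Fin.castSucc_lt_succ),
    maxIdealSmul_ball_ssubset htotal (hy 0) (hy _),
    fun μ hμ => exists_nonneg_coeffs_latticeNorm_ball htotal hμ0 hy0 hy hanti hcover hμ⟩
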